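/- arXiv:2308.14080 — 3 statements merged into one kernel-verified Lean document; each statement's English description precedes it below -/
import Mathlib

section
/- Let f be continuously differentiable, μ-strongly convex with L-Lipschitz gradient (0 < μ < L), let {x_k}, {y_k} be generated by the NAG method with s ∈ (0, 1/L), and define E_k := s(t_{k+1}-1)t_{k+1}(f(x_k) - f*) + (1/2)‖(t_{k+1}-1)(y_k - x_k) + (y_k - x*)‖². Then for all k ≥ 0, E_{k+1} - E_k ≤ -(s² t_{k+1}² (1 - sL)/2)‖∇f(y_k)‖² - (μs(t_{k+1}-1)t_{k+1}/2)‖y_k - x_k‖² - (μs t_{k+1}/2)‖y_k - x*‖². -/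
open Filter Finset
open scoped RealInnerProductSpace Topology

section Aux
variable {E : Type*} [NormedAddCommGroup E] [InnerProductSpace ℝ E] [CompleteSpace E]

lemma hasDerivAt_line (f : E → ℝ) {g : E} {p v : E} {τ : ℝ}
    (hg : HasGradientAt f g (p + τ • v)) :
    HasDerivAt (fun r : ℝ => f (p + r • v)) ⟪g, v⟫ τ := by
  have hline : HasDerivAt (fun r : ℝ => p + r • v) v τ := by
    simpa using ((hasDerivAt_id τ).smul_const v).const_add p
  have := hg.hasFDerivAt.comp_hasDerivAt τ hline
  simpa [InnerProductSpace.toDual_apply_apply, Function.comp_def] using this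

lemma subgrad_ineq (h : E → ℝ) (hconv : ConvexOn ℝ Set.univ h) {y z g : E}
    (hg : HasGradientAt h g y) :
    h y + ⟪g, z - y⟫ ≤ h z := by
  rcases eq_or_ne z y with rfl | hne
  · simp
  set φ : ℝ → ℝ := fun τ => h (y + τ • (z - y)) with hφ
  have hφconv : ConvexOn ℝ Set.univ φ := by
    refine ⟨convex_univ, fun a _ b _ ca cb hca hcb hab => ?_⟩
    have key : ca • (y + a • (z - y)) + cb • (y + b • (z - y))
        = (ca + cb) • y + (ca * a + cb * b) • (z - y) := by module
    have h2 := hconv.2 (Set.mem_univ (y + a • (z - y))) (Set.mem_univ (y + b • (z - y)))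
      hca hcb hab
    rw [key, hab, one_smul] at h2
    simpa [hφ, smul_eq_mul] using h2
  have hder : HasDerivAt φ ⟪g, z - y⟫ 0 := by
    have := hasDerivAt_line h (g := g) (p := y) (v := z - y) (τ := 0) (by simpa using hg)
    simpa [hφ] using this
  have hslope := hφconv.le_slope_of_hasDerivAt (Set.mem_univ (0:ℝ)) (Set.mem_univ (1:ℝ))
    zero_lt_one hder
  have hφ0 : φ 0 = h y := by simp [hφ]
  have hφ1 : φ 1 = h z := by simp [hφ]
  rw [slope_def_field, hφ0, hφ1] at hslope
  simp at hslope
  linarith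

lemma descent_ineq (f : E → ℝ) (hd : Differentiable ℝ f) {L : ℝ} (hL : 0 ≤ L)
    (hlip : LipschitzWith (Real.toNNReal L) (fun z => gradient f z)) (p v : E) :
    f (p + v) ≤ f p + ⟪gradient f p, v⟫ + L / 2 * ‖v‖ ^ 2 := by
  set φ : ℝ → ℝ := fun τ => f (p + τ • v) - τ * ⟪gradient f p, v⟫ - L / 2 * τ ^ 2 * ‖v‖ ^ 2 with hφ
  have hder : ∀ τ : ℝ, HasDerivAt φ
      (⟪gradient f (p + τ • v), v⟫ - ⟪gradient f p, v⟫ - L * τ * ‖v‖ ^ 2) τ := by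
    intro τ
    have h1 := hasDerivAt_line f (g := gradient f (p + τ • v)) (p := p) (v := v) (τ := τ)
      ((hd _).hasGradientAt)
    have h2 : HasDerivAt (fun τ : ℝ => τ * ⟪gradient f p, v⟫) ⟪gradient f p, v⟫ τ := by
      simpa using (hasDerivAt_id τ).mul_const (⟪gradient f p, v⟫ : ℝ)
    have h3 : HasDerivAt (fun τ : ℝ => L / 2 * τ ^ 2 * ‖v‖ ^ 2) (L * τ * ‖v‖ ^ 2) τ := by
      have := ((hasDerivAt_pow 2 τ).const_mul (L / 2)).mul_const (‖v‖ ^ 2)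
      exact this.congr_deriv (by push_cast; ring)
    exact (h1.sub h2).sub h3
  have hmono : AntitoneOn φ (Set.Icc (0:ℝ) 1) := by
    apply antitoneOn_of_deriv_nonpos (convex_Icc 0 1)
    · exact fun τ _ => (hder τ).continuousAt.continuousWithinAt
    · exact fun τ _ => (hder τ).differentiableAt.differentiableWithinAt
    · intro τ hτ
      rw [interior_Icc] at hτ
      rw [(hder τ).deriv]
      have hsub : ⟪gradient f (p + τ • v), v⟫ - ⟪gradient f p, v⟫
          = ⟪gradient f (p + τ • v) - gradient f p, v⟫ := (inner_sub_left _ _ _).symm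
      have hcs := real_inner_le_norm (gradient f (p + τ • v) - gradient f p) v
      have hlipb : ‖gradient f (p + τ • v) - gradient f p‖ ≤ L * (τ * ‖v‖) := by
        have hd2 := hlip.dist_le_mul (p + τ • v) p
        rw [Real.coe_toNNReal L hL] at hd2
        simpa [dist_eq_norm, norm_smul, abs_of_pos hτ.1, mul_assoc] using hd2
      have hv : (0:ℝ) ≤ ‖v‖ := norm_nonneg v
      rw [hsub]
      nlinarith [hcs, hlipb, mul_le_mul_of_nonneg_right hlipb hv]
  have h01 := hmono (Set.left_mem_Icc.2 zero_le_one) (Set.right_mem_Icc.2 zero_le_one) zero_le_one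
  simp only [hφ, one_smul, zero_smul, add_zero, one_pow, mul_one, zero_pow, mul_zero,
    zero_mul, sub_zero, one_mul] at h01
  linarith

lemma strong_lower (f : E → ℝ) (hd : Differentiable ℝ f) {μ : ℝ}
    (hsc : ConvexOn ℝ Set.univ (fun z => f z - μ / 2 * ‖z‖ ^ 2)) (y z : E) :
    f y + ⟪gradient f y, z - y⟫ + μ / 2 * ‖z - y‖ ^ 2 ≤ f z := by
  have hgq : HasGradientAt (fun z : E => f z - μ / 2 * ‖z‖ ^ 2) (gradient f y - (μ/2 * 2) • y) y := by
    have h1 : HasFDerivAt f (InnerProductSpace.toDual ℝ E (gradient f y)) y :=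
      (hd y).hasGradientAt
    have h2 : HasFDerivAt (fun x : E => μ / 2 * ‖x‖ ^ 2) ((μ / 2) • (2 • innerSL ℝ y)) y :=
      (hasStrictFDerivAt_norm_sq y).hasFDerivAt.const_mul (μ / 2)
    have h3 := h1.sub h2
    rw [hasGradientAt_iff_hasFDerivAt]
    refine h3.congr_fderiv ?_
    ext w
    simp [InnerProductSpace.toDual_apply_apply, inner_sub_left, real_inner_smul_left]
    ring
  have := subgrad_ineq _ hsc (z := z) hgq
  have hn : ‖z - y‖ ^ 2 = ‖z‖ ^ 2 - 2 * ⟪z, y⟫ + ‖y‖ ^ 2 := norm_sub_sq_real z y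
  have hy2 : ⟪y, y⟫ = ‖y‖ ^ 2 := real_inner_self_eq_norm_sq y
  rw [inner_sub_left, real_inner_smul_left, inner_sub_right, inner_sub_right, hy2] at this
  rw [real_inner_comm y z] at hn
  rw [inner_sub_right, hn]
  linarith

end Aux

set_option maxHeartbeats 1000000 in
theorem lyapunov_decrease {n : ℕ}
    (f : EuclideanSpace ℝ (Fin n) → ℝ) (μ L s : ℝ)
    (hμ : 0 < μ) (hμL : μ < L)
    (hf : ContDiff ℝ 1 f)
    (hsc : ConvexOn ℝ Set.univ (fun z => f z - μ / 2 * ‖z‖ ^ 2))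
    (hlip : LipschitzWith (Real.toNNReal L) (fun z => gradient f z))
    (xs : EuclideanSpace ℝ (Fin n)) (hmin : ∀ z, f xs ≤ f z)
    (huniq : ∀ z, f z = f xs → z = xs)
    (t : ℕ → ℝ) (ht1 : t 1 = 1) (htmono : ∀ k, 1 ≤ k → t k < t (k + 1))
    (htlim : Tendsto t atTop atTop)
    (htrec : ∀ k, 1 ≤ k → t (k + 1) ^ 2 - t (k + 1) ≤ t k ^ 2)
    (x y : ℕ → EuclideanSpace ℝ (Fin n))
    (hxy0 : x 0 = y 0)
    (hx : ∀ k, x (k + 1) = y k - s • gradient f (y k))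
    (hy : ∀ k, y (k + 1) = x (k + 1) + ((t (k + 1) - 1) / t (k + 2)) • (x (k + 1) - x k))
    (hs0 : 0 < s) (hs1 : s < 1 / L)
    (En : ℕ → ℝ)
    (hE : ∀ k, En k = s * (t (k + 1) - 1) * t (k + 1) * (f (x k) - f xs) +
      1 / 2 * ‖(t (k + 1) - 1) • (y k - x k) + (y k - xs)‖ ^ 2)
    :
    ∀ k, En (k + 1) - En k ≤
      -(s ^ 2 * t (k + 1) ^ 2 * (1 - s * L) / 2) * ‖gradient f (y k)‖ ^ 2 -
      μ * s * (t (k + 1) - 1) * t (k + 1) / 2 * ‖y k - x k‖ ^ 2 -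
      μ * s * t (k + 1) / 2 * ‖y k - xs‖ ^ 2 := by
  intro k
  have hL0 : (0:ℝ) < L := hμ.trans hμL
  have hd : Differentiable ℝ f := hf.differentiable one_ne_zero
  have ht_ge : ∀ m, 1 ≤ m → (1:ℝ) ≤ t m := by
    intro m hm
    induction m, hm using Nat.le_induction with
    | base => exact ht1.ge
    | succ p hp ih => exact ih.trans (htmono p hp).le
  have hT1 : (1:ℝ) ≤ t (k + 1) := ht_ge (k + 1) (by omega)
  have hT2 : (1:ℝ) ≤ t (k + 2) := ht_ge (k + 2) (by omega)
  have hT2ne : t (k + 2) ≠ 0 := by linarith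
  set g := gradient f (y k) with hgdef
  -- key inequality
  have key : ∀ z : EuclideanSpace ℝ (Fin n),
      f (x (k + 1)) ≤ f z + ⟪y k - z, g⟫ + (L * s ^ 2 / 2 - s) * ‖g‖ ^ 2
        - μ / 2 * ‖y k - z‖ ^ 2 := by
    intro z
    have hxk1 : x (k + 1) = y k + (-s) • g := by rw [hx k]; module
    have hdesc := descent_ineq f hd hL0.le hlip (y k) ((-s) • g)
    rw [← hxk1] at hdesc
    rw [real_inner_smul_right, real_inner_self_eq_norm_sq] at hdesc
    have hnsm : ‖(-s) • g‖ ^ 2 = s ^ 2 * ‖g‖ ^ 2 := by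
      rw [norm_smul, Real.norm_eq_abs, abs_neg, abs_of_pos hs0, mul_pow]
    rw [hnsm] at hdesc
    have hsl := strong_lower f hd hsc (y k) z
    have hir : ⟪g, z - y k⟫ = -⟪y k - z, g⟫ := by
      rw [real_inner_comm]
      rw [show z - y k = -(y k - z) by abel, inner_neg_left]
    rw [hir] at hsl
    have hnr : ‖z - y k‖ ^ 2 = ‖y k - z‖ ^ 2 := by rw [norm_sub_rev]
    rw [hnr] at hsl
    linarith
  set v := (t (k + 1) - 1) • (y k - x k) + (y k - xs) with hvdef
  have hvrec : (t (k + 1 + 1) - 1) • (y (k + 1) - x (k + 1)) + (y (k + 1) - xs)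
      = v - (s * t (k + 1)) • g := by
    rw [hy k, hx k, hvdef, ← hgdef]
    match_scalars <;> field_simp <;> ring
  have hst : (0:ℝ) ≤ s * t (k + 1) := by positivity
  have hvv : ‖v - (s * t (k + 1)) • g‖ ^ 2
      = ‖v‖ ^ 2 - 2 * (s * t (k + 1)) * ⟪v, g⟫ + (s * t (k + 1)) ^ 2 * ‖g‖ ^ 2 := by
    rw [norm_sub_sq_real, real_inner_smul_right, norm_smul, Real.norm_eq_abs,
      abs_of_nonneg hst, mul_pow]
    ring
  have hinner : ⟪v, g⟫ = (t (k + 1) - 1) * ⟪y k - x k, g⟫ + ⟪y k - xs, g⟫ := by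
    rw [hvdef, inner_add_left, real_inner_smul_left]
  have hq : (t (k + 2) - 1) * t (k + 2) ≤ t (k + 1) ^ 2 := by
    have := htrec (k + 1) (by omega)
    nlinarith
  have hd1 : (0:ℝ) ≤ f (x (k + 1)) - f xs := by linarith [hmin (x (k + 1))]
  have P1 : s * ((t (k + 2) - 1) * t (k + 2)) * (f (x (k + 1)) - f xs)
      ≤ s * t (k + 1) ^ 2 * (f (x (k + 1)) - f xs) := by
    apply mul_le_mul_of_nonneg_right _ hd1
    exact mul_le_mul_of_nonneg_left hq hs0.le
  have c1 : (0:ℝ) ≤ s * ((t (k + 1) - 1) * t (k + 1)) :=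
    mul_nonneg hs0.le (mul_nonneg (by linarith) (by linarith))
  have c2 : (0:ℝ) ≤ s * t (k + 1) := hst
  have P2 := mul_le_mul_of_nonneg_left (key (x k)) c1
  have P3 := mul_le_mul_of_nonneg_left (key xs) c2
  rw [hE (k + 1), hE k, hvrec, ← hvdef, hvv]
  simp only [show k + 1 + 1 = k + 2 from rfl]
  rw [hinner] at *
  linarith [P1, P2, P3]
end

section
/- Let f be continuously differentiable, μ-strongly convex with L-Lipschitz gradient (0 < μ < L), let {x_k}, {y_k} be generated by the NAG method with s = 1/L (with the convention x_{-1} = x_0), let λ := 2 / ( sqrt( ((L-μ)²/μ²)(4L-μ)² + 8L(2L-μ)(L-μ)/μ ) - ((L-μ)/μ)(4L-μ) ), and define E_k := λ(f(x_k) - f*) + (1/2)‖x_k - x_{k-1}‖² for k ≥ 0. Then with ρ := 2λL(L-μ)/(μ + λ(2L-μ)(L-μ)), one has 0 < ρ < (4L² - 3Lμ)/(4L² - 3Lμ + μ²) < 1, E_{k+1} ≤ ρE_k for all k ≥ 0, and f(x_k) - f* ≤ ρ^k (f(x_0) - f*) for all k ≥ 1. -/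
open Filter Finset
open scoped RealInnerProductSpace Topology

noncomputable def lamConst (μ L : ℝ) : ℝ :=
  2 / (Real.sqrt ((L - μ) ^ 2 / μ ^ 2 * (4 * L - μ) ^ 2 +
        8 * L * (2 * L - μ) * (L - μ) / μ) - (L - μ) / μ * (4 * L - μ))

noncomputable def rhoConst (μ L : ℝ) : ℝ :=
  2 * lamConst μ L * L * (L - μ) / (μ + lamConst μ L * (2 * L - μ) * (L - μ))

/-! ### Auxiliary analysis lemmas -/

section analysis
variable {E : Type*} [NormedAddCommGroup E] [InnerProductSpace ℝ E] [CompleteSpace E]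

lemma aux_fderiv_eq_inner_gradient (f : E → ℝ) (x : E) (u : E) :
    fderiv ℝ f x u = ⟪gradient f x, u⟫ := by
  have : InnerProductSpace.toDual ℝ E (gradient f x) = fderiv ℝ f x := by
    simp [gradient]
  rw [← this, InnerProductSpace.toDual_apply_apply]

lemma aux_convexOn_tangent {φ : E → ℝ} (hconv : ConvexOn ℝ Set.univ φ) {a b : E}
    {D : E →L[ℝ] ℝ} (hd : HasFDerivAt φ D a) : φ a + D (b - a) ≤ φ b := by
  rcases eq_or_ne b a with rfl | hne
  · simp
  · set ψ : ℝ → ℝ := fun θ => φ (a + θ • (b - a)) with hψ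
    have hψconv : ConvexOn ℝ Set.univ ψ := by
      have h := hconv.comp_affineMap (AffineMap.lineMap a b : ℝ →ᵃ[ℝ] E)
      simp only [Set.preimage_univ] at h
      have hfun : ψ = φ ∘ (AffineMap.lineMap a b) := by
        funext θ
        simp only [Function.comp_apply, AffineMap.lineMap_apply_module, ψ]
        congr 1
        module
      rw [hfun]
      exact h
    have hcurve : HasDerivAt (fun θ : ℝ => a + θ • (b - a)) (b - a) 0 := by
      simpa using ((hasDerivAt_id (0:ℝ)).smul_const (b - a)).const_add a
    have hd' : HasFDerivAt φ D ((fun θ : ℝ => a + θ • (b - a)) 0) := by simpa using hd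
    have hψd : HasDerivAt ψ (D (b - a)) 0 := by
      exact hd'.comp_hasDerivAt 0 hcurve
    have := hψconv.le_slope_of_hasDerivAt (Set.mem_univ 0) (Set.mem_univ 1) one_pos hψd
    rw [slope_def_field] at this
    simp only [ψ, zero_smul, add_zero, one_smul] at this
    have hb : a + (b - a) = b := by abel
    rw [hb] at this
    have h2 : (φ b - φ a) / (1 - 0) = φ b - φ a := by norm_num
    rw [h2] at this
    linarith

lemma aux_strong_tangent {f : E → ℝ} {μ : ℝ} (hf : ContDiff ℝ 1 f)
    (hsc : ConvexOn ℝ Set.univ (fun z => f z - μ / 2 * ‖z‖ ^ 2)) (a b : E) :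
    f a + ⟪gradient f a, b - a⟫ + μ / 2 * ‖b - a‖ ^ 2 ≤ f b := by
  have hfd : HasFDerivAt f (fderiv ℝ f a) a :=
    ((hf.differentiable one_ne_zero) a).hasFDerivAt
  have hnsq : HasFDerivAt (fun z : E => μ / 2 * ‖z‖ ^ 2)
      ((μ / 2) • (2 • (innerSL ℝ a))) a :=
    ((hasStrictFDerivAt_norm_sq a).hasFDerivAt).const_smul (μ / 2)
  have hφ : HasFDerivAt (fun z => f z - μ / 2 * ‖z‖ ^ 2)
      (fderiv ℝ f a - (μ / 2) • (2 • (innerSL ℝ a))) a := hfd.sub hnsq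
  have h := aux_convexOn_tangent hsc hφ (b := b)
  have happ : (fderiv ℝ f a - (μ / 2) • (2 • (innerSL ℝ a))) (b - a)
      = ⟪gradient f a, b - a⟫ - μ * ⟪a, b - a⟫ := by
    simp [aux_fderiv_eq_inner_gradient, two_smul, -inner_gradient_left]
    ring
  rw [happ] at h
  have hnorm : ‖b - a‖ ^ 2 = ‖b‖ ^ 2 - 2 * ⟪a, b - a⟫ - ‖a‖ ^ 2 := by
    rw [← real_inner_self_eq_norm_sq, ← real_inner_self_eq_norm_sq, ← real_inner_self_eq_norm_sq]
    rw [inner_sub_left, inner_sub_right, inner_sub_right, real_inner_comm a b]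
    ring
  have expand : μ / 2 * ‖b - a‖ ^ 2 = μ / 2 * ‖b‖ ^ 2 - μ * ⟪a, b - a⟫ - μ / 2 * ‖a‖ ^ 2 := by
    rw [hnorm]; ring
  linarith [h, expand]

lemma aux_lipschitz_descent {f : E → ℝ} {L : ℝ} (hL : 0 < L) (hf : ContDiff ℝ 1 f)
    (hlip : LipschitzWith (Real.toNNReal L) (fun z => gradient f z)) (a b : E) :
    f b ≤ f a + ⟪gradient f a, b - a⟫ + L / 2 * ‖b - a‖ ^ 2 := by
  set d := b - a with hd
  have hdiff : Differentiable ℝ f := hf.differentiable one_ne_zero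
  set h : ℝ → ℝ := fun θ => f (a + θ • d) - θ * ⟪gradient f a, d⟫ - L * θ ^ 2 / 2 * ‖d‖ ^ 2
    with hh
  have hcurve : ∀ θ : ℝ, HasDerivAt (fun θ : ℝ => a + θ • d) d θ := fun θ => by
    simpa using ((hasDerivAt_id θ).smul_const d).const_add a
  have hderiv : ∀ θ : ℝ, HasDerivAt h
      (⟪gradient f (a + θ • d), d⟫ - ⟪gradient f a, d⟫ - L * θ * ‖d‖ ^ 2) θ := by
    intro θ
    have h1 : HasDerivAt (fun θ : ℝ => f (a + θ • d)) (⟪gradient f (a + θ • d), d⟫) θ := by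
      have hfd : HasFDerivAt f (fderiv ℝ f (a + θ • d)) ((fun θ : ℝ => a + θ • d) θ) :=
        (hdiff _).hasFDerivAt
      have := hfd.comp_hasDerivAt θ (hcurve θ)
      rw [aux_fderiv_eq_inner_gradient] at this
      exact this
    have h2 : HasDerivAt (fun θ : ℝ => θ * ⟪gradient f a, d⟫) (⟪gradient f a, d⟫) θ := by
      simpa using (hasDerivAt_id θ).mul_const (⟪gradient f a, d⟫)
    have h3 : HasDerivAt (fun θ : ℝ => L * θ ^ 2 / 2 * ‖d‖ ^ 2) (L * θ * ‖d‖ ^ 2) θ := by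
      have := ((hasDerivAt_pow 2 θ).const_mul L).div_const 2 |>.mul_const (‖d‖ ^ 2)
      exact this.congr_deriv (by ring)
    exact (h1.sub h2).sub h3
  have hanti : AntitoneOn h (Set.Icc 0 1) := by
    apply antitoneOn_of_deriv_nonpos (convex_Icc 0 1)
    · exact fun θ _ => ((hderiv θ).continuousAt).continuousWithinAt
    · exact fun θ _ => ((hderiv θ).differentiableAt).differentiableWithinAt
    · intro θ hθ
      rw [interior_Icc, Set.mem_Ioo] at hθ
      rw [(hderiv θ).deriv]
      have hip : ⟪gradient f (a + θ • d), d⟫ - ⟪gradient f a, d⟫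
          = ⟪gradient f (a + θ • d) - gradient f a, d⟫ := by rw [inner_sub_left]
      have hcs : ⟪gradient f (a + θ • d) - gradient f a, d⟫
          ≤ ‖gradient f (a + θ • d) - gradient f a‖ * ‖d‖ := real_inner_le_norm _ _
      have hlipb : ‖gradient f (a + θ • d) - gradient f a‖ ≤ L * (θ * ‖d‖) := by
        have := hlip.dist_le_mul (a + θ • d) a
        rw [dist_eq_norm, dist_eq_norm] at this
        calc ‖gradient f (a + θ • d) - gradient f a‖ ≤ (Real.toNNReal L : ℝ) * ‖a + θ • d - a‖ :=
              this
          _ = L * (θ * ‖d‖) := by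
              rw [Real.coe_toNNReal L hL.le]
              congr 1
              have : a + θ • d - a = θ • d := by abel
              rw [this, norm_smul, Real.norm_eq_abs, abs_of_pos hθ.1]
      have hnd : 0 ≤ ‖d‖ := norm_nonneg d
      nlinarith [hcs, hlipb, mul_le_mul_of_nonneg_right hlipb hnd]
  have h10 : h 1 ≤ h 0 := hanti (Set.mem_Icc.2 ⟨le_refl 0, zero_le_one⟩)
    (Set.mem_Icc.2 ⟨zero_le_one, le_refl 1⟩) zero_le_one
  simp only [hh, one_smul, zero_smul, add_zero, one_pow, one_mul, zero_mul, zero_pow] at h10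
  have hab : a + d = b := by rw [hd]; abel
  rw [hab] at h10
  norm_num [-inner_gradient_left] at h10
  linarith

end analysis

/-! ### Facts about the constants -/

section consts
variable {μ L : ℝ} (hμ : 0 < μ) (hμL : μ < L)
include hμ hμL

lemma aux_lam_facts : 0 < lamConst μ L ∧
    2 * L * (2 * L - μ) * (L - μ) * (lamConst μ L) ^ 2
      = (L - μ) * (4 * L - μ) * lamConst μ L + μ := by
  have hL : 0 < L := hμ.trans hμL
  have hLμ : 0 < L - μ := by linarith
  have h2L : 0 < 2 * L - μ := by linarith
  have h4L : 0 < 4 * L - μ := by linarith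
  have hc0 : 0 < (L - μ) * (4 * L - μ) := mul_pos hLμ h4L
  obtain ⟨w, hw0, hw2, hwc, hlam⟩ : ∃ w : ℝ, 0 ≤ w ∧
      w ^ 2 = ((L - μ) * (4 * L - μ)) ^ 2 + 8 * L * (2 * L - μ) * (L - μ) * μ ∧
      (L - μ) * (4 * L - μ) < w ∧ lamConst μ L = 2 * μ / (w - (L - μ) * (4 * L - μ)) := by
    set D := (L - μ) ^ 2 / μ ^ 2 * (4 * L - μ) ^ 2 + 8 * L * (2 * L - μ) * (L - μ) / μ with hD
    have hD0 : 0 ≤ D := by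
      rw [hD]
      have h1 : 0 < 8 * L * (2 * L - μ) * (L - μ) / μ := div_pos (by nlinarith) hμ
      positivity
    refine ⟨Real.sqrt D * μ, mul_nonneg (Real.sqrt_nonneg _) hμ.le, ?_, ?_, ?_⟩
    · rw [mul_pow, Real.sq_sqrt hD0, hD]; field_simp
    · have hsq : ((L - μ) * (4 * L - μ) / μ) ^ 2 < D := by
        rw [hD]
        have h1 : 0 < 8 * L * (2 * L - μ) * (L - μ) / μ := div_pos (by nlinarith) hμ
        have : ((L - μ) * (4 * L - μ) / μ) ^ 2 = (L - μ) ^ 2 / μ ^ 2 * (4 * L - μ) ^ 2 := by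
          field_simp
        rw [this]; linarith
      have h2 : (L - μ) * (4 * L - μ) / μ < Real.sqrt D := by
        have := Real.sqrt_lt_sqrt (by positivity) hsq
        rwa [Real.sqrt_sq (by positivity)] at this
      calc (L - μ) * (4 * L - μ) = ((L - μ) * (4 * L - μ) / μ) * μ := by field_simp
        _ < Real.sqrt D * μ := by exact mul_lt_mul_of_pos_right h2 hμ
    · rw [lamConst, ← hD]
      rw [show Real.sqrt D - (L - μ) / μ * (4 * L - μ)
            = (Real.sqrt D * μ - (L - μ) * (4 * L - μ)) / μ by field_simp]
      rw [div_div_eq_mul_div]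
  have hne : w - (L - μ) * (4 * L - μ) ≠ 0 := by linarith
  have e1 : lamConst μ L * (w - (L - μ) * (4 * L - μ)) = 2 * μ := by
    rw [hlam]; exact div_mul_cancel₀ _ hne
  constructor
  · rw [hlam]; exact div_pos (by linarith) (by linarith)
  · have key : (2 * L * (2 * L - μ) * (L - μ) * (lamConst μ L) ^ 2
        - ((L - μ) * (4 * L - μ) * lamConst μ L + μ)) * (w - (L - μ) * (4 * L - μ)) ^ 2 = 0 := by
      linear_combination (2 * (L * (2 * L - μ) * (L - μ)) *
          (lamConst μ L * (w - (L - μ) * (4 * L - μ)) + 2 * μ)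
          - (L - μ) * (4 * L - μ) * (w - (L - μ) * (4 * L - μ))) * e1 - μ * hw2
    have := mul_eq_zero.mp key
    rcases this with h | h
    · linarith
    · exact absurd (pow_eq_zero_iff (n := 2) (by norm_num) |>.mp h) hne

lemma aux_quad_lt {lam : ℝ}
    (hq : 2*L*(2*L-μ)*(L-μ)*lam^2 = (L-μ)*(4*L-μ)*lam + μ)
    (h0 : 0 < lam) : (L-μ)*lam < 1 := by
  have hL : 0 < L := hμ.trans hμL
  by_contra h
  push_neg at h
  have key := mul_le_mul_of_nonneg_left h
    (show (0:ℝ) ≤ 2*L*(2*L-μ)*lam by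
      nlinarith [mul_pos (mul_pos hL (show (0:ℝ) < 2*L-μ by linarith)) h0])
  have h2 : μ*(3*L-μ)*lam ≤ μ := by nlinarith [key, hq]
  nlinarith [h2, h, mul_pos hμ (mul_pos hL h0)]

lemma aux_quad_gt {lam : ℝ}
    (hq : 2*L*(2*L-μ)*(L-μ)*lam^2 = (L-μ)*(4*L-μ)*lam + μ)
    (h0 : 0 < lam) : 4*L-μ < L*(4*L-3*μ)*lam := by
  have hL : 0 < L := hμ.trans hμL
  have h2L : 0 < 2*L - μ := by linarith
  have hLμ : 0 < L - μ := by linarith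
  by_contra h
  push_neg at h
  have key1 := mul_le_mul_of_nonneg_left h
    (show (0:ℝ) ≤ 2*(2*L-μ)*(L-μ)*lam by nlinarith [mul_pos (mul_pos h2L hLμ) h0])
  have step1 : μ*(4*L-3*μ) ≤ μ*((L-μ)*(4*L-μ)*lam) := by nlinarith [key1, hq]
  have key2 := mul_le_mul_of_nonneg_left h
    (show (0:ℝ) ≤ μ*(L-μ)*(4*L-μ) by
      nlinarith [mul_pos (mul_pos hμ hLμ) (show (0:ℝ) < 4*L-μ by linarith)])
  have key3 := mul_le_mul_of_nonneg_left step1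
    (show (0:ℝ) ≤ L*(4*L-3*μ) by
      nlinarith [mul_pos hL (show (0:ℝ) < 4*L-3*μ by linarith)])
  nlinarith [key2, key3, mul_pos hμ (mul_pos hμ (mul_pos hμ hμ))]

lemma aux_m_gt_one {lam : ℝ}
    (hq : 2*L*(2*L-μ)*(L-μ)*lam^2 = (L-μ)*(4*L-μ)*lam + μ)
    (h0 : 0 < lam) : 1 < (2*L-μ)*lam - 1 := by
  have hL : 0 < L := hμ.trans hμL
  have h2L : 0 < 2*L - μ := by linarith
  have hgt := aux_quad_gt hμ hμL hq h0
  nlinarith [mul_lt_mul_of_pos_left hgt h2L, sq_nonneg μ,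
    mul_pos hL (show (0:ℝ) < 4*L-3*μ by linarith)]

lemma aux_m_gt_frac {lam : ℝ}
    (hq : 2*L*(2*L-μ)*(L-μ)*lam^2 = (L-μ)*(4*L-μ)*lam + μ)
    (h0 : 0 < lam) :
    (4*L^2-3*L*μ+μ^2) < ((2*L-μ)*lam - 1)*(4*L^2-3*L*μ) := by
  have hL : 0 < L := hμ.trans hμL
  have h2L : 0 < 2*L - μ := by linarith
  have hgt := aux_quad_gt hμ hμL hq h0
  nlinarith [mul_lt_mul_of_pos_left hgt h2L]

lemma aux_rho_eq : rhoConst μ L * ((2*L-μ)*lamConst μ L - 1) = 1 := by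
  obtain ⟨h0, hq⟩ := aux_lam_facts hμ hμL
  have hL : 0 < L := hμ.trans hμL
  have hLμ : 0 < L - μ := by linarith
  have hm := aux_m_gt_one hμ hμL hq h0
  have denom_eq : μ + lamConst μ L * (2*L-μ) * (L-μ)
      = 2*L*(L-μ)*lamConst μ L * ((2*L-μ)*lamConst μ L - 1) := by
    linear_combination -hq
  rw [rhoConst, denom_eq]
  rw [div_mul_eq_mul_div, div_eq_one_iff_eq (by positivity)]
  ring
end consts

/-! ### The key one-step scalar inequality -/

set_option maxHeartbeats 1000000 in
lemma aux_step_scalar {μ L lam rho : ℝ} (hμ : 0 < μ) (hμL : μ < L)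
    (hq : 2*L*(2*L-μ)*(L-μ)*lam^2 = (L-μ)*(4*L-μ)*lam + μ)
    (hlam : 0 < lam) (hm : 1 < (2*L-μ)*lam - 1)
    (hρ : rho * ((2*L-μ)*lam - 1) = 1)
    (hlt : (L-μ)*lam < 1)
    {F P F' G V c β : ℝ}
    (hβ0 : 0 ≤ β) (hβ1 : β ≤ 1)
    (h1 : F' ≤ P - 1/(2*L)*G^2)
    (h2 : P ≤ F + β*c - μ/2*β^2*V^2)
    (h3 : 2*μ*P ≤ G^2)
    (h5 : c ≤ G*V) :
    lam*F' + 1/2*(β^2*V^2 - 2*(1/L)*(β*c) + (1/L)^2*G^2) ≤ rho*(lam*F + 1/2*V^2) := by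
  have hL : 0 < L := hμ.trans hμL
  have hm0 : 0 < (2*L-μ)*lam - 1 := by linarith
  have hρ0 : 0 < rho := by nlinarith [hρ, hm0]
  have hρ1 : rho < 1 := by nlinarith [hρ, hm, hρ0]
  obtain ⟨B0, hB0def⟩ : ∃ B0 : ℝ, B0 = rho*(1-(L-μ)*lam) := ⟨_, rfl⟩
  have hB00 : 0 ≤ B0 := hB0def ▸ mul_nonneg hρ0.le (by linarith)
  have id1c : L*(rho*lam) - 1 = B0 := by rw [hB0def]; linear_combination hρ
  have id2c : 2*L^2*((1-rho)*lam) - 2*L*μ*lam + 2*μ = -(μ*B0) := by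
    rw [hB0def]
    linear_combination rho*hq - (2*L^2*lam - 2*μ*L*lam + 2*μ)*hρ
  have id3c : 2*L^2*(μ*(1-μ*rho*lam)) = 2*L^2*(μ*rho) - 4*L^2*(μ*B0) := by
    rw [hB0def]; linear_combination (-2*L^2*μ)*hρ
  have h1' : 2*L*F' ≤ 2*L*P - G^2 := by
    have := mul_le_mul_of_nonneg_left h1 (by positivity : (0:ℝ) ≤ 2*L)
    have e : 2*L*(P - 1/(2*L)*G^2) = 2*L*P - G^2 := by
      first | (field_simp; ring) | field_simp
    linarith [this, e]
  have s1 : 4*L^2*μ*(lam*F') ≤ 4*L^2*μ*(lam*P) - 2*L*μ*lam*G^2 := by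
    have := mul_le_mul_of_nonneg_left h1' (by positivity : (0:ℝ) ≤ 2*L*μ*lam)
    nlinarith [this]
  have s2a : 4*L^2*μ*(rho*lam)*P ≤ 4*L^2*μ*(rho*lam)*(F + β*c - μ/2*β^2*V^2) :=
    mul_le_mul_of_nonneg_left h2 (by positivity)
  have s2b : (1-rho)*lam*(2*L^2)*(2*μ*P) ≤ (1-rho)*lam*(2*L^2)*G^2 :=
    mul_le_mul_of_nonneg_left h3 (by nlinarith [hρ1, hlam, sq_nonneg L])
  have s4 : 4*L*μ*B0*β*c ≤ 4*L*μ*B0*β*(G*V) :=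
    mul_le_mul_of_nonneg_left h5 (by positivity)
  have hfin : -(μ*B0)*G^2 + 4*L*μ*B0*(β*(G*V)) - 4*L^2*(μ*B0)*(β^2*V^2)
      ≤ 2*L^2*(μ*rho)*(1-β^2)*V^2 := by
    have hsq := mul_nonneg (mul_nonneg hμ.le hB00) (sq_nonneg (G - 2*L*(β*V)))
    have hβsq : 0 ≤ 1 - β^2 := by nlinarith [hβ0, hβ1]
    have hrv := mul_nonneg (mul_nonneg (by positivity : (0:ℝ) ≤ 2*L^2*(μ*rho)) hβsq)
      (sq_nonneg V)
    nlinarith [hsq, hrv]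
  have id1m := congrArg (fun r : ℝ => 4*L*μ*(β*c)*r) id1c
  have id2m := congrArg (fun r : ℝ => r * G^2) id2c
  have id3m := congrArg (fun r : ℝ => r * (β^2*V^2)) id3c
  have main : 4*L^2*μ*(lam*F' + 1/2*(β^2*V^2 - 2*(1/L)*(β*c) + (1/L)^2*G^2))
      ≤ 4*L^2*μ*(rho*(lam*F + 1/2*V^2)) := by
    have elhs : 4*L^2*μ*(lam*F' + 1/2*(β^2*V^2 - 2*(1/L)*(β*c) + (1/L)^2*G^2))
        = 4*L^2*μ*(lam*F') + 2*L^2*μ*(β^2*V^2) - 4*L*μ*(β*c) + 2*μ*G^2 := by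
      first | (field_simp; ring) | field_simp
    have erhs : 4*L^2*μ*(rho*(lam*F + 1/2*V^2))
        = 4*L^2*μ*(rho*lam)*F + 2*L^2*(μ*rho)*V^2 := by ring
    rw [elhs, erhs]
    linarith [s1, s2a, s2b, s4, hfin, id1m, id2m, id3m]
  exact le_of_mul_le_mul_left main (by positivity)

set_option maxHeartbeats 2000000 in
theorem lyapunov_q_linear_step_one_over_L {n : ℕ}
    (f : EuclideanSpace ℝ (Fin n) → ℝ) (μ L s : ℝ)
    (hμ : 0 < μ) (hμL : μ < L)
    (hf : ContDiff ℝ 1 f)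
    (hsc : ConvexOn ℝ Set.univ (fun z => f z - μ / 2 * ‖z‖ ^ 2))
    (hlip : LipschitzWith (Real.toNNReal L) (fun z => gradient f z))
    (xs : EuclideanSpace ℝ (Fin n)) (hmin : ∀ z, f xs ≤ f z)
    (huniq : ∀ z, f z = f xs → z = xs)
    (t : ℕ → ℝ) (ht1 : t 1 = 1) (htmono : ∀ k, 1 ≤ k → t k < t (k + 1))
    (htlim : Tendsto t atTop atTop)
    (htrec : ∀ k, 1 ≤ k → t (k + 1) ^ 2 - t (k + 1) ≤ t k ^ 2)
    (x y : ℕ → EuclideanSpace ℝ (Fin n))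
    (hxy0 : x 0 = y 0)
    (hx : ∀ k, x (k + 1) = y k - s • gradient f (y k))
    (hy : ∀ k, y (k + 1) = x (k + 1) + ((t (k + 1) - 1) / t (k + 2)) • (x (k + 1) - x k))
    (hs : s = 1 / L)
    (En : ℕ → ℝ)
    (hE : ∀ k, En k = lamConst μ L * (f (x k) - f xs) + 1 / 2 * ‖x k - x (k - 1)‖ ^ 2) :
    0 < rhoConst μ L ∧
    rhoConst μ L < (4 * L ^ 2 - 3 * L * μ) / (4 * L ^ 2 - 3 * L * μ + μ ^ 2) ∧
    (4 * L ^ 2 - 3 * L * μ) / (4 * L ^ 2 - 3 * L * μ + μ ^ 2) < 1 ∧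
    (∀ k, En (k + 1) ≤ rhoConst μ L * En k) ∧
    ∀ k, 1 ≤ k → f (x k) - f xs ≤ rhoConst μ L ^ k * (f (x 0) - f xs) := by
  subst hs
  have hL : 0 < L := hμ.trans hμL
  obtain ⟨hlam0, hq⟩ := aux_lam_facts hμ hμL
  have hm := aux_m_gt_one hμ hμL hq hlam0
  have hρeq := aux_rho_eq hμ hμL
  have hlt := aux_quad_lt hμ hμL hq hlam0
  have hρ0 : 0 < rhoConst μ L := by nlinarith [hρeq, hm]
  have hfrac := aux_m_gt_frac hμ hμL hq hlam0
  have hden : 0 < 4*L^2 - 3*L*μ + μ^2 := by nlinarith [mul_pos hL hμ, sq_nonneg μ]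
  have hnum : 0 < 4*L^2 - 3*L*μ := by nlinarith [mul_pos hL hμ]
  have hstep : ∀ k, En (k + 1) ≤ rhoConst μ L * En k := by
    have hge1 : ∀ j, 1 ≤ j → (1:ℝ) ≤ t j := by
      intro j hj
      induction j, hj using Nat.le_induction with
      | base => rw [ht1]
      | succ n hn ih => linarith [htmono n hn]
    have hstepmain : ∀ k : ℕ, ∀ β : ℝ, 0 ≤ β → β ≤ 1 →
        y k - x k = β • (x k - x (k - 1)) → En (k + 1) ≤ rhoConst μ L * En k := by
      intro k β hβ0 hβ1 hyx
      set g := gradient f (y k) with hg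
      set v := x k - x (k - 1) with hv
      have hxk : x (k+1) - x k = β • v - (1/L) • g := by
        rw [hx k, ← hyx]; abel
      have h1 : f (x (k+1)) - f xs ≤ (f (y k) - f xs) - 1/(2*L)*‖g‖^2 := by
        have hd := aux_lipschitz_descent hL hf hlip (y k) (x (k+1))
        have hxy : x (k+1) - y k = -((1/L) • g) := by rw [hx k]; abel
        rw [hxy, inner_neg_right, real_inner_smul_right, real_inner_self_eq_norm_sq,
          norm_neg, norm_smul, Real.norm_eq_abs,
          abs_of_pos (show (0:ℝ) < 1/L by positivity)] at hd
        rw [← hg] at hd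
        have heq : L / 2 * (1/L*‖g‖)^2 = 1/(2*L)*‖g‖^2 := by
          first | (field_simp; ring) | field_simp
        have heq2 : 1/L*‖g‖^2 = 2*(1/(2*L)*‖g‖^2) := by
          first | (field_simp; ring) | field_simp
        linarith [hd, heq, heq2]
      have h2 : f (y k) - f xs ≤ (f (x k) - f xs) + β*⟪g, v⟫ - μ/2*β^2*‖v‖^2 := by
        have hst := aux_strong_tangent hf hsc (y k) (x k)
        have hxy2 : x k - y k = -(β • v) := by rw [← hyx]; abel
        rw [hxy2, inner_neg_right, real_inner_smul_right, norm_neg, norm_smul,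
          Real.norm_eq_abs, abs_of_nonneg hβ0] at hst
        have heq3 : μ/2*(β*‖v‖)^2 = μ/2*β^2*‖v‖^2 := by ring
        linarith [hst, heq3]
      have h3 : 2*μ*(f (y k) - f xs) ≤ ‖g‖^2 := by
        have hst := aux_strong_tangent hf hsc (y k) xs
        have hlow : -(‖g‖*‖xs - y k‖) ≤ ⟪g, xs - y k⟫ := by
          have habs := abs_real_inner_le_norm g (xs - y k)
          have := neg_abs_le (⟪g, xs - y k⟫)
          linarith
        set r := ‖xs - y k‖ with hr
        have hb : f (y k) - f xs ≤ ‖g‖*r - μ/2*r^2 := by linarith [hst, hlow]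
        have hc : 2*μ*(‖g‖*r - μ/2*r^2) ≤ ‖g‖^2 := by nlinarith [sq_nonneg (‖g‖ - μ*r)]
        have hmul := mul_le_mul_of_nonneg_left hb (by positivity : (0:ℝ) ≤ 2*μ)
        linarith [hmul, hc]
      have h5 : ⟪g, v⟫ ≤ ‖g‖*‖v‖ := real_inner_le_norm g v
      have hexp : ‖x (k+1) - x k‖^2 = β^2*‖v‖^2 - 2*(1/L)*(β*⟪g,v⟫) + (1/L)^2*‖g‖^2 := by
        rw [hxk, @norm_sub_sq_real, norm_smul, norm_smul, real_inner_smul_left,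
          real_inner_smul_right, Real.norm_eq_abs, Real.norm_eq_abs, abs_of_nonneg hβ0,
          abs_of_pos (show (0:ℝ) < 1/L by positivity), real_inner_comm v g]
        ring
      have happly := aux_step_scalar hμ hμL hq hlam0 hm hρeq hlt hβ0 hβ1 h1 h2 h3 h5
      rw [hE (k+1), hE k]
      simp only [Nat.add_sub_cancel]
      rw [hexp]
      linarith [happly]
    intro k
    match k with
    | 0 =>
        refine hstepmain 0 0 le_rfl zero_le_one ?_
        rw [hxy0]
        simp
    | (m+1) =>
        have ht1' : (1:ℝ) ≤ t (m+1) := hge1 (m+1) (by omega)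
        have ht2 : t (m+1) < t (m+2) := htmono (m+1) (by omega)
        have ht2pos : (0:ℝ) < t (m+2) := by linarith
        refine hstepmain (m+1) ((t (m+1) - 1)/ t (m+2)) ?_ ?_ ?_
        · exact div_nonneg (by linarith) ht2pos.le
        · rw [div_le_one ht2pos]; linarith
        · rw [hy m]
          simp only [Nat.add_sub_cancel]
          abel
  refine ⟨hρ0, ?_, ?_, ?_, ?_⟩
  · rw [lt_div_iff₀ hden]
    calc rhoConst μ L * (4*L^2 - 3*L*μ + μ^2)
        < rhoConst μ L * (((2*L-μ)*lamConst μ L - 1)*(4*L^2-3*L*μ)) :=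
          mul_lt_mul_of_pos_left hfrac hρ0
      _ = (rhoConst μ L * ((2*L-μ)*lamConst μ L - 1))*(4*L^2-3*L*μ) := by ring
      _ = 4*L^2 - 3*L*μ := by rw [hρeq]; ring
  · rw [div_lt_one hden]
    nlinarith [sq_nonneg μ, mul_pos hμ hμ]
  · exact hstep
  · -- geometric decay of function values
    have hE0 : En 0 = lamConst μ L * (f (x 0) - f xs) := by
      rw [hE 0]
      norm_num
    have hdecay : ∀ k, En k ≤ rhoConst μ L ^ k * En 0 := by
      intro k
      induction k with
      | zero => simp
      | succ n ih =>
        calc En (n+1) ≤ rhoConst μ L * En n := hstep n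
          _ ≤ rhoConst μ L * (rhoConst μ L ^ n * En 0) := mul_le_mul_of_nonneg_left ih hρ0.le
          _ = rhoConst μ L ^ (n+1) * En 0 := by ring
    intro k _
    have h1 := hdecay k
    rw [hE0] at h1
    have h2 : lamConst μ L * (f (x k) - f xs) ≤ En k := by
      rw [hE k]
      have := sq_nonneg ‖x k - x (k-1)‖
      linarith
    have h3 : lamConst μ L * (f (x k) - f xs)
        ≤ lamConst μ L * (rhoConst μ L ^ k * (f (x 0) - f xs)) := by
      calc lamConst μ L * (f (x k) - f xs) ≤ En k := h2
        _ ≤ rhoConst μ L ^ k * (lamConst μ L * (f (x 0) - f xs)) := h1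
        _ = lamConst μ L * (rhoConst μ L ^ k * (f (x 0) - f xs)) := by ring
    exact le_of_mul_le_mul_left h3 hlam0
end

section
/- Let f be continuously differentiable, μ-strongly convex with L-Lipschitz gradient (0 < μ ≤ L), let g : ℝⁿ → (-∞, +∞] be a proper closed convex function, set F := f + g, and for s > 0 define G_s(y) := (y - prox_{sg}(y - s∇f(y)))/s, where prox_{sg}(z) is the unique minimizer of x ↦ s·g(x) + (1/2)‖x - z‖². Then for all x, y ∈ ℝⁿ, F(y - sG_s(y)) ≤ F(x) + ⟨G_s(y), y - x⟩ - (s - Ls²/2)‖G_s(y)‖² - (μ/2)‖y - x‖² (as an inequality in the extended reals). -/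
open Filter Finset
open scoped RealInnerProductSpace Topology

variable {E : Type*} [NormedAddCommGroup E] [InnerProductSpace ℝ E] [CompleteSpace E]

lemma aux_line_deriv (f : E → ℝ) (hf : Differentiable ℝ f) (y v : E) (t : ℝ) :
    HasDerivAt (fun t : ℝ => f (y + t • v)) ⟪gradient f (y + t • v), v⟫ t := by
  have hline : HasDerivAt (fun t : ℝ => y + t • v) v t := by
    simpa using ((hasDerivAt_id t).smul_const v).const_add y
  have h1 := ((hf (y + t • v)).hasGradientAt.hasFDerivAt).comp_hasDerivAt t hline
  simpa [InnerProductSpace.toDual_apply_apply, Function.comp_def] using h1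

lemma aux_limit (K c d : ℝ) (h : ∀ θ : ℝ, 0 < θ → θ ≤ 1 → c ≤ d + θ * K) : c ≤ d := by
  have htd : Tendsto (fun θ : ℝ => d + θ * K) (𝓝[>] (0:ℝ)) (𝓝 d) := by
    have : Tendsto (fun θ : ℝ => d + θ * K) (𝓝 (0:ℝ)) (𝓝 (d + 0 * K)) := by
      exact (tendsto_const_nhds.add ((continuous_id.mul continuous_const).tendsto 0))
    simpa using this.mono_left nhdsWithin_le_nhds
  refine ge_of_tendsto htd ?_
  filter_upwards [Ioo_mem_nhdsGT_of_mem (by norm_num : (0:ℝ) ∈ Set.Ico (0:ℝ) 1)] with θ hθ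
  exact h θ hθ.1 hθ.2.le

lemma aux_convex_slope {h : E → ℝ} (hc : ConvexOn ℝ Set.univ h) (y v : E) {d : ℝ}
    (hd : HasDerivAt (fun t : ℝ => h (y + t • v)) d 0) : h y + d ≤ h (y + v) := by
  have key : ∀ θ : ℝ, 0 < θ → θ ≤ 1 → h (y + θ • v) ≤ h y + θ * (h (y + v) - h y) := by
    intro θ hθ hθ1
    have hcomb := hc.2 (Set.mem_univ y) (Set.mem_univ (y + v)) (by linarith : (0:ℝ) ≤ 1 - θ)
      hθ.le (by ring)
    have heq : (1 - θ) • y + θ • (y + v) = y + θ • v := by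
      rw [smul_add]; module
    rw [heq] at hcomb
    simp only [smul_eq_mul] at hcomb
    nlinarith [hcomb]
  -- slope tendsto
  have hslope : Tendsto (fun θ : ℝ => (h (y + θ • v) - h y) / θ) (𝓝[>] (0:ℝ)) (𝓝 d) := by
    have := (hasDerivAt_iff_tendsto_slope).1 hd
    have h2 := this.mono_left (nhdsWithin_mono 0 (by intro a ha; exact ne_of_gt ha : Set.Ioi (0:ℝ) ⊆ {0}ᶜ))
    refine h2.congr' ?_
    filter_upwards [self_mem_nhdsWithin] with θ (hθ : 0 < θ)
    simp [slope_def_field]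
  have : d ≤ h (y + v) - h y := by
    refine le_of_tendsto hslope ?_
    filter_upwards [self_mem_nhdsWithin, Ioo_mem_nhdsGT_of_mem (by norm_num : (0:ℝ) ∈ Set.Ico (0:ℝ) 1)] with θ hθp hθ
    have := key θ hθ.1 hθ.2.le
    rw [div_le_iff₀ (hθ.1)]
    nlinarith [this]
  linarith

lemma aux_descent (f : E → ℝ) (L : ℝ) (hL : 0 ≤ L) (hf : ContDiff ℝ 1 f)
    (hlip : LipschitzWith (Real.toNNReal L) (fun z => gradient f z)) (a b : E) :
    f b ≤ f a + ⟪gradient f a, b - a⟫ + L / 2 * ‖b - a‖ ^ 2 := by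
  have hdf : Differentiable ℝ f := hf.differentiable one_ne_zero
  set v := b - a with hv
  set ρ : ℝ → ℝ := fun t => f (a + t • v) - t * ⟪gradient f a, v⟫ - L / 2 * t ^ 2 * ‖v‖ ^ 2 with hρ
  have hρd : ∀ t : ℝ, HasDerivAt ρ (⟪gradient f (a + t • v), v⟫ - ⟪gradient f a, v⟫ - L * t * ‖v‖ ^ 2) t := by
    intro t
    have h1 := aux_line_deriv f hdf a v t
    have h2 : HasDerivAt (fun t : ℝ => t * ⟪gradient f a, v⟫) ⟪gradient f a, v⟫ t := by
      simpa using (hasDerivAt_id t).mul_const ⟪gradient f a, v⟫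
    have h3 : HasDerivAt (fun t : ℝ => L / 2 * t ^ 2 * ‖v‖ ^ 2) (L * t * ‖v‖ ^ 2) t := by
      have := ((hasDerivAt_pow 2 t).const_mul (L / 2)).mul_const (‖v‖ ^ 2)
      refine this.congr_deriv ?_; ring
    simpa [hρ] using (h1.fun_sub h2).fun_sub h3
  have hanti : AntitoneOn ρ (Set.Icc 0 1) := by
    refine antitoneOn_of_deriv_nonpos (convex_Icc 0 1) ?_ ?_ ?_
    · exact Continuous.continuousOn (by
        have : Continuous ρ := by
          apply Continuous.sub
          apply Continuous.sub
          · exact hf.continuous.comp (by continuity)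
          · continuity
          · continuity
        exact this)
    · intro t ht
      exact ((hρd t).differentiableAt).differentiableWithinAt
    · intro t ht
      rw [interior_Icc] at ht
      rw [(hρd t).deriv]
      have hlt : ⟪gradient f (a + t • v) - gradient f a, v⟫ ≤ L * t * ‖v‖ ^ 2 := by
        have h4 : ‖gradient f (a + t • v) - gradient f a‖ ≤ L * (t * ‖v‖) := by
          have := hlip.dist_le_mul (a + t • v) a
          rw [dist_eq_norm, dist_eq_norm] at this
          simp only [add_sub_cancel_left] at this
          rw [norm_smul] at this
          calc ‖gradient f (a + t • v) - gradient f a‖ ≤ Real.toNNReal L * (‖t‖ * ‖v‖) := this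
            _ = L * (|t| * ‖v‖) := by rw [Real.coe_toNNReal L hL]; simp [abs_eq_self.2 ht.1.le]
            _ = L * (t * ‖v‖) := by rw [abs_of_pos ht.1]
        calc ⟪gradient f (a + t • v) - gradient f a, v⟫
            ≤ ‖gradient f (a + t • v) - gradient f a‖ * ‖v‖ := real_inner_le_norm _ _
          _ ≤ L * (t * ‖v‖) * ‖v‖ := by
              apply mul_le_mul_of_nonneg_right h4 (norm_nonneg v)
          _ = L * t * ‖v‖ ^ 2 := by ring
      rw [inner_sub_left] at hlt
      linarith
  have := hanti (Set.mem_Icc.2 ⟨le_rfl, zero_le_one⟩) (Set.mem_Icc.2 ⟨zero_le_one, le_rfl⟩) zero_le_one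
  simp only [hρ, zero_smul, add_zero, one_smul, zero_mul, zero_pow, mul_zero, sub_zero, one_pow, mul_one, one_mul] at this
  have hb : a + v = b := by rw [hv]; abel
  rw [hb] at this
  linarith

set_option maxHeartbeats 1000000 in
theorem composite_descent_inequality {n : ℕ}
    (f : EuclideanSpace ℝ (Fin n) → ℝ) (μ L s : ℝ)
    (hμ : 0 < μ) (hμL : μ ≤ L)
    (hf : ContDiff ℝ 1 f)
    (hsc : ConvexOn ℝ Set.univ (fun z => f z - μ / 2 * ‖z‖ ^ 2))
    (hlip : LipschitzWith (Real.toNNReal L) (fun z => gradient f z))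
    (hs : 0 < s)
    (g : EuclideanSpace ℝ (Fin n) → EReal)
    (hgbot : ∀ z, g z ≠ ⊥) (hgne : ∃ z, g z ≠ ⊤)
    (hglsc : LowerSemicontinuous g)
    (hgconv : ∀ z w : EuclideanSpace ℝ (Fin n), ∀ θ : ℝ, 0 ≤ θ → θ ≤ 1 →
      g (θ • z + (1 - θ) • w) ≤ (θ : EReal) * g z + ((1 - θ : ℝ) : EReal) * g w)
    (prox : EuclideanSpace ℝ (Fin n) → EuclideanSpace ℝ (Fin n))
    (hprox : ∀ z w, (s : EReal) * g (prox z) + ((‖prox z - z‖ ^ 2 / 2 : ℝ) : EReal) ≤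
      (s : EReal) * g w + ((‖w - z‖ ^ 2 / 2 : ℝ) : EReal))
    (hproxuniq : ∀ z w, (s : EReal) * g w + ((‖w - z‖ ^ 2 / 2 : ℝ) : EReal) =
      (s : EReal) * g (prox z) + ((‖prox z - z‖ ^ 2 / 2 : ℝ) : EReal) → w = prox z)
    (F : EuclideanSpace ℝ (Fin n) → EReal) (hF : ∀ z, F z = (f z : EReal) + g z)
    (Gs : EuclideanSpace ℝ (Fin n) → EuclideanSpace ℝ (Fin n))
    (hGs : ∀ z, Gs z = (1 / s) • (z - prox (z - s • gradient f z)))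
    :
    ∀ x y : EuclideanSpace ℝ (Fin n),
      F (y - s • Gs y) ≤ F x +
        ((⟪Gs y, y - x⟫ - (s - L * s ^ 2 / 2) * ‖Gs y‖ ^ 2 -
          μ / 2 * ‖y - x‖ ^ 2 : ℝ) : EReal) := by
  intro x y
  have hL : 0 ≤ L := le_trans hμ.le hμL
  set z : EuclideanSpace ℝ (Fin n) := y - s • gradient f y with hz
  set p : EuclideanSpace ℝ (Fin n) := prox z with hpdef
  have hp : y - s • Gs y = p := by
    rw [hGs y, smul_smul, mul_one_div, div_self hs.ne', one_smul, ← hz, ← hpdef]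
    abel
  obtain ⟨w₀, hw₀⟩ := hgne
  have hgw₀ : g w₀ = ((g w₀).toReal : EReal) := (EReal.coe_toReal hw₀ (hgbot w₀)).symm
  have hgp_top : g p ≠ ⊤ := by
    intro htop
    have h1 := hprox z w₀
    rw [← hpdef, htop, hgw₀, ← EReal.coe_mul] at h1
    rw [EReal.coe_mul_top_of_pos hs, EReal.top_add_coe, top_le_iff, ← EReal.coe_add] at h1
    exact EReal.coe_ne_top _ h1
  set a : ℝ := (g p).toReal with ha
  have hgp : g p = (a : EReal) := (EReal.coe_toReal hgp_top (hgbot p)).symm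
  rw [hp]
  by_cases hx : g x = ⊤
  · rw [hF x, hx, EReal.coe_add_top, EReal.top_add_coe]
    exact le_top
  set b : ℝ := (g x).toReal with hb
  have hgx : g x = (b : EReal) := (EReal.coe_toReal hx (hgbot x)).symm
  -- descent lemma for f
  have h1 : f p ≤ f y + ⟪gradient f y, p - y⟫ + L / 2 * ‖p - y‖ ^ 2 :=
    aux_descent f L hL hf hlip y p
  -- strong convexity inequality
  have h2 : f y + ⟪gradient f y, x - y⟫ + μ / 2 * ‖y - x‖ ^ 2 ≤ f x := by
    have hder : HasDerivAt (fun t : ℝ => f (y + t • (x - y)) - μ / 2 * ‖y + t • (x - y)‖ ^ 2)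
        (⟪gradient f y, x - y⟫ - μ * ⟪y, x - y⟫) 0 := by
      have hA := aux_line_deriv f (hf.differentiable one_ne_zero) y (x - y) 0
      simp only [zero_smul, add_zero] at hA
      have hB : HasDerivAt (fun t : ℝ => μ / 2 * ‖y + t • (x - y)‖ ^ 2) (μ * ⟪y, x - y⟫) 0 := by
        have heq : (fun t : ℝ => μ / 2 * ‖y + t • (x - y)‖ ^ 2)
            = fun t : ℝ => μ / 2 * ‖y‖ ^ 2 + (μ * ⟪y, x - y⟫) * t + μ / 2 * ‖x - y‖ ^ 2 * t ^ 2 := by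
          funext t
          rw [norm_add_sq_real, real_inner_smul_right, norm_smul]
          simp only [Real.norm_eq_abs, mul_pow, sq_abs]
          ring
        rw [heq]
        have d1 : HasDerivAt (fun t : ℝ => (μ * ⟪y, x - y⟫) * t) (μ * ⟪y, x - y⟫) 0 := by
          simpa using (hasDerivAt_id (0:ℝ)).const_mul (μ * ⟪y, x - y⟫)
        have d2 : HasDerivAt (fun t : ℝ => μ / 2 * ‖x - y‖ ^ 2 * t ^ 2) 0 0 := by
          simpa using (hasDerivAt_pow 2 (0:ℝ)).const_mul (μ / 2 * ‖x - y‖ ^ 2)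
        simpa using ((hasDerivAt_const (0:ℝ) (μ / 2 * ‖y‖ ^ 2)).fun_add d1).fun_add d2
      simpa using hA.fun_sub hB
    have hkey := aux_convex_slope hsc y (x - y) hder
    simp only [add_sub_cancel] at hkey
    have hns : ‖y - x‖ ^ 2 = ‖y‖ ^ 2 - 2 * ⟪y, x⟫ + ‖x‖ ^ 2 := norm_sub_sq_real y x
    have hip : ⟪y, x - y⟫ = ⟪y, x⟫ - ‖y‖ ^ 2 := by
      rw [inner_sub_right, real_inner_self_eq_norm_sq]
    have hid : μ / 2 * ‖y - x‖ ^ 2 + μ / 2 * ‖y‖ ^ 2 + μ * ⟪y, x - y⟫ = μ / 2 * ‖x‖ ^ 2 := by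
      rw [hns, hip]; ring
    linarith [hkey, hid]
  -- prox subgradient inequality
  have hkey3 : ∀ θ : ℝ, 0 < θ → θ ≤ 1 →
      s * a ≤ (s * b + ⟪p - z, x - p⟫) + θ * (‖x - p‖ ^ 2 / 2) := by
    intro θ hθ hθ1
    have hc := hgconv x p θ hθ.le hθ1
    rw [hgx, hgp, ← EReal.coe_mul, ← EReal.coe_mul, ← EReal.coe_add] at hc
    have hpx := hprox z (θ • x + (1 - θ) • p)
    rw [← hpdef, hgp] at hpx
    have hchain := le_trans hpx (add_le_add_left
      (mul_le_mul_of_nonneg_left hc (by exact_mod_cast hs.le : (0:EReal) ≤ (s:ℝ))) _)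
    rw [← EReal.coe_mul, ← EReal.coe_mul, ← EReal.coe_add, ← EReal.coe_add,
      EReal.coe_le_coe_iff] at hchain
    have hwz : θ • x + (1 - θ) • p - z = (p - z) + θ • (x - p) := by module
    have hexp : ‖θ • x + (1 - θ) • p - z‖ ^ 2
        = ‖p - z‖ ^ 2 + 2 * θ * ⟪p - z, x - p⟫ + θ ^ 2 * ‖x - p‖ ^ 2 := by
      rw [hwz, norm_add_sq_real, real_inner_smul_right, norm_smul]
      simp only [Real.norm_eq_abs, mul_pow, sq_abs]
      ring
    rw [hexp] at hchain
    have h5 : θ * (s * a) ≤ θ * ((s * b + ⟪p - z, x - p⟫) + θ * (‖x - p‖ ^ 2 / 2)) := by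
      nlinarith [hchain]
    exact (mul_le_mul_iff_right₀ hθ).1 h5
  have h3 := aux_limit (‖x - p‖ ^ 2 / 2) _ _ hkey3
  have hpz : p - z = s • (gradient f y - Gs y) := by
    rw [← hp, hz]; module
  rw [hpz, real_inner_smul_left] at h3
  have h3' : a ≤ b + ⟪gradient f y - Gs y, x - p⟫ := by
    have h6 : s * a ≤ s * (b + ⟪gradient f y - Gs y, x - p⟫) := by linarith
    exact (mul_le_mul_iff_right₀ hs).1 h6
  -- combine
  rw [hF p, hF x, hgp, hgx, ← EReal.coe_add, ← EReal.coe_add, ← EReal.coe_add,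
    EReal.coe_le_coe_iff]
  have hpy : p - y = -(s • Gs y) := by rw [← hp]; abel
  have hxp : x - p = (x - y) + s • Gs y := by rw [← hp]; abel
  rw [hpy, inner_neg_right, real_inner_smul_right, norm_neg, norm_smul] at h1
  rw [hxp, inner_sub_left, inner_add_right, inner_add_right, real_inner_smul_right,
    real_inner_smul_right, real_inner_self_eq_norm_sq] at h3'
  have hyx : ⟪Gs y, y - x⟫ = -⟪Gs y, x - y⟫ := by
    rw [← neg_sub, inner_neg_right]
  rw [hyx]
  have habs : |s| = s := abs_of_pos hs
  simp only [Real.norm_eq_abs, habs, mul_pow] at h1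
  nlinarith [h1, h2, h3']
end
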